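/- arXiv:1905.13467 — 2 statements merged into one kernel-verified Lean document; each statement's English description precedes it below -/
import Mathlib

section
/- Preemption cycles witness synchronism sensitivity (second part): Let N be an RPN, M a marking and S ⊆ T a set of transitions such that S fires as a step from M. If the pair (S, M) is normal (S is not a-enabled in M), then S contains a preemption cycle, i.e. there is a nonempty subset {t_1,…,t_k} ⊆ S whose elements can be enumerated so that t_1 ⤳ t_2 ⤳ … ⤳ t_k ⤳ t_1. -/
/-- A Read Petri net with places `P` and transitions `T`: nonempty presets,
contexts disjoint from presets, and an initial marking. Markings are sets of places. -/
structure RPN (P T : Type) where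
  pre : T → Set P
  cont : T → Set P
  post : T → Set P
  M0 : Set P
  pre_nonempty : ∀ t, (pre t).Nonempty
  cont_disjoint : ∀ t, Disjoint (cont t) (pre t)

variable {P T : Type}

/-- A transition is enabled in `M` when its preset and context are marked. -/
def enabled (N : RPN P T) (t : T) (M : Set P) : Prop :=
  N.pre t ∪ N.cont t ⊆ M

/-- The marking resulting from firing `t` in `M`. -/
def fireRes (N : RPN P T) (t : T) (M : Set P) : Set P :=
  (M \ N.pre t) ∪ N.post t

/-- `M →_t M'`: firing the enabled transition `t` from `M` leads to `M'`. -/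
def fire (N : RPN P T) (t : T) (M M' : Set P) : Prop :=
  enabled N t M ∧ M' = fireRes N t M

/-- A list of transitions fires sequentially from `M`. -/
def seqEnabled (N : RPN P T) : Set P → List T → Prop
  | _, [] => True
  | M, t :: l => enabled N t M ∧ seqEnabled N (fireRes N t M) l

/-- A list of transitions fires sequentially from `M` and reaches `M'` (an a-run). -/
def fireList (N : RPN P T) : Set P → List T → Set P → Prop
  | M, [], M' => M' = M
  | M, t :: l, M' => enabled N t M ∧ fireList N (fireRes N t M) l M'

/-- The set `S` is a-enabled in `M`: its elements can be ordered so that they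
fire sequentially from `M`. -/
def aEnabled (N : RPN P T) (S : Set T) (M : Set P) : Prop :=
  ∃ l : List T, l.Nodup ∧ (∀ t, t ∈ l ↔ t ∈ S) ∧ seqEnabled N M l

/-- The step `S` fires from `M` leading to `M'`. -/
def stepFires (N : RPN P T) (S : Set T) (M M' : Set P) : Prop :=
  (∀ t ∈ S, enabled N t M) ∧
  (S.Pairwise fun t t' => Disjoint (N.pre t) (N.pre t')) ∧
  M' = (M \ ⋃ t ∈ S, N.pre t) ∪ ⋃ t ∈ S, N.post t

/-- `t ⤳ t'`: `t` preempts `t'`. -/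
def preempt (N : RPN P T) (t t' : T) : Prop :=
  (N.pre t ∩ N.cont t').Nonempty

/-- `S` is a preemption cycle: its elements can be enumerated as
`t_1 ⤳ t_2 ⤳ … ⤳ t_n ⤳ t_1`. -/
def isPreemptionCycle (N : RPN P T) (S : Set T) : Prop :=
  ∃ (l : List T) (h : l ≠ []), l.Nodup ∧ (∀ t, t ∈ l ↔ t ∈ S) ∧
    l.Chain' (preempt N) ∧ preempt N (l.getLast h) (l.head h)


section Aux
variable {α : Type*} {r : α → α → Prop}

open List Relation

lemma exists_walk {a b : α} (h : Relation.TransGen r a b) :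
    ∃ L : List α, L.Chain' r ∧ L.head? = some a ∧ L.getLast? = some b ∧ 2 ≤ L.length := by
  induction h with
  | @single b' h => exact ⟨[a, b'], List.isChain_pair.mpr h, by simp, by simp, by simp⟩
  | @tail b' c' h1 h2 ih =>
    obtain ⟨L, hc, hh, hl, hlen⟩ := ih
    have hne : L ≠ [] := by rintro rfl; simp at hlen
    refine ⟨L ++ [c'], ?_, ?_, ?_, ?_⟩
    · change List.IsChain r _; rw [List.isChain_append]
      refine ⟨hc, List.isChain_singleton _, ?_⟩
      intro x hx y hy
      simp at hy
      rw [hl] at hx; simp at hx; subst hx; subst hy; exact h2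
    · rw [List.head?_append_of_ne_nil _ hne]; exact hh
    · simp
    · simp; omega

lemma exists_raw_cycle {t : α} (h : Relation.TransGen r t t) :
    ∃ (C : List α) (hC : C ≠ []), C.Chain' r ∧ r (C.getLast hC) (C.head hC) := by
  obtain ⟨L, hc, hh, hl, hlen⟩ := exists_walk h
  have hLC : L.dropLast ++ [t] = L := List.dropLast_append_getLast? _ hl
  obtain ⟨a, C', hC⟩ : ∃ a C', L.dropLast = a :: C' := by
    cases hd : L.dropLast with
    | nil => rw [hd] at hLC; rw [← hLC] at hlen; simp at hlen
    | cons a C' => exact ⟨a, C', rfl⟩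
  rw [hC] at hLC
  have hh' : a = t := by rw [← hLC] at hh; simpa using hh
  have hne : (a :: C') ≠ [] := by simp
  refine ⟨a :: C', hne, ?_, ?_⟩
  · exact hc.prefix ⟨[t], hLC⟩
  · rw [← hLC] at hc; change List.IsChain r _ at hc; rw [List.isChain_append] at hc
    have hlast : (a :: C').getLast? = some ((a :: C').getLast hne) :=
      List.getLast?_eq_getLast_of_ne_nil _
    have := hc.2.2 _ (Option.mem_def.mpr hlast) t (Option.mem_def.mpr rfl)
    subst hh'
    simpa using this

lemma dup_decomp {x : α} {l : List α} (h : List.Duplicate x l) :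
    ∃ l1 l2 l3 : List α, l = l1 ++ x :: (l2 ++ x :: l3) := by
  induction h with
  | cons_mem hm =>
    obtain ⟨s, u, rfl⟩ := List.append_of_mem hm
    exact ⟨[], s, u, by simp⟩
  | @cons_duplicate y l' _ ih =>
    obtain ⟨l1, l2, l3, rfl⟩ := ih
    exact ⟨y :: l1, l2, l3, by simp⟩

lemma exists_simple_cycle_aux : ∀ (n : ℕ) (C : List α) (_ : C.length ≤ n) (hC : C ≠ []),
    C.Chain' r → r (C.getLast hC) (C.head hC) →
    ∃ (D : List α) (hD : D ≠ []), D.Nodup ∧ D.Chain' r ∧ r (D.getLast hD) (D.head hD) ∧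
      ∀ x ∈ D, x ∈ C := by
  intro n
  induction n using Nat.strong_induction_on with
  | _ n ih =>
    intro C hlen hC hchain hwrap
    by_cases hnd : C.Nodup
    · exact ⟨C, hC, hnd, hchain, hwrap, fun x hx => hx⟩
    · obtain ⟨x, hx⟩ := List.exists_duplicate_iff_not_nodup.2 hnd
      obtain ⟨l1, l2, l3, hCeq⟩ := dup_decomp hx
      have hinfix : (x :: l2 ++ [x]) <:+: C := ⟨l1, l3, by simp [hCeq]⟩
      have hch2 : (x :: l2 ++ [x]).Chain' r := hchain.infix hinfix
      change List.IsChain r _ at hch2; rw [List.isChain_append] at hch2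
      have hD0ne : (x :: l2) ≠ [] := by simp
      have hlast : (x :: l2).getLast? = some ((x :: l2).getLast hD0ne) :=
        List.getLast?_eq_getLast_of_ne_nil _
      have hwrap2 : r ((x :: l2).getLast hD0ne) ((x :: l2).head hD0ne) := by
        have := hch2.2.2 _ (Option.mem_def.mpr hlast) x (Option.mem_def.mpr rfl)
        simpa using this
      have hlt : (x :: l2).length < n := by
        have : (x :: l2).length < C.length := by simp [hCeq]; omega
        omega
      obtain ⟨D, hD, h1, h2, h3, h4⟩ :=
        ih (x :: l2).length hlt (x :: l2) le_rfl hD0ne hch2.1 hwrap2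
      refine ⟨D, hD, h1, h2, h3, fun y hy => ?_⟩
      have hyx := h4 y hy
      rw [hCeq]
      simp only [List.mem_cons] at hyx
      rcases hyx with rfl | hyl2
      · simp
      · simp [hyl2]



lemma chain_targets {a : α} {l : List α} (h : List.Chain r a l) : ∀ x ∈ l, ∃ y, r y x := by
  induction l generalizing a with
  | nil => simp
  | cons b l ih =>
    intro x hx
    have hcc := List.isChain_cons_cons.mp (show List.IsChain r (a :: b :: l) from h)
    rcases List.mem_cons.mp hx with rfl | hx
    exacts [⟨_, hcc.1⟩, ih hcc.2 x hx]

lemma topo_sort [Finite α] (r : α → α → Prop) : ∀ (n : ℕ) (S : Set α), S.ncard ≤ n →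
    (∀ t, ¬ Relation.TransGen (fun a b => a ∈ S ∧ b ∈ S ∧ r a b) t t) →
    ∃ l : List α, l.Nodup ∧ (∀ t, t ∈ l ↔ t ∈ S) ∧ l.Pairwise (fun a b => ¬ r a b) := by
  intro n
  induction n with
  | zero =>
    intro S hcard _
    have hS : S = ∅ := by
      have := Set.ncard_pos (Set.toFinite S)
      rcases S.eq_empty_or_nonempty with h | h
      · exact h
      · exact absurd (this.mpr h) (by omega)
    exact ⟨[], by simp, by simp [hS], by simp⟩
  | succ n ih =>
    intro S hcard hacyc
    rcases S.eq_empty_or_nonempty with rfl | hne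
    · exact ⟨[], by simp, by simp, by simp⟩
    haveI : IsTrans α (fun a b => Relation.TransGen (fun a b => a ∈ S ∧ b ∈ S ∧ r a b) b a) :=
      ⟨fun _ _ _ h1 h2 => h2.trans h1⟩
    haveI : IsIrrefl α (fun a b => Relation.TransGen (fun a b => a ∈ S ∧ b ∈ S ∧ r a b) b a) :=
      ⟨fun a h => hacyc a h⟩
    have hwf := Finite.wellFounded_of_trans_of_irrefl
      (fun a b => Relation.TransGen (fun a b => a ∈ S ∧ b ∈ S ∧ r a b) b a)
    obtain ⟨m, hmS, hmin⟩ := hwf.has_min S hne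
    have hsink : ∀ x ∈ S, ¬ r m x := fun x hx hr =>
      hmin x hx (Relation.TransGen.single ⟨hmS, hx, hr⟩)
    have hcard' : (S \ {m}).ncard ≤ n := by
      have h1 : (S \ {m}).ncard = S.ncard - 1 :=
        Set.ncard_diff_singleton_of_mem hmS
      have h2 : 0 < S.ncard := (Set.ncard_pos (Set.toFinite S)).mpr hne
      omega
    have hacyc' : ∀ t, ¬ Relation.TransGen
        (fun a b => a ∈ S \ {m} ∧ b ∈ S \ {m} ∧ r a b) t t := by
      intro t ht
      exact hacyc t (Relation.TransGen.mono (fun a b (h : _) => (⟨h.1.1, h.2.1.1, h.2.2⟩ : a ∈ S ∧ b ∈ S ∧ r a b)) t t ht)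
    obtain ⟨l, hnd, hmem, hpw⟩ := ih (S \ {m}) hcard' hacyc'
    refine ⟨m :: l, ?_, ?_, ?_⟩
    · exact List.nodup_cons.mpr ⟨fun hm => ((hmem m).1 hm).2 rfl, hnd⟩
    · intro t
      simp only [List.mem_cons, hmem t, Set.mem_diff, Set.mem_singleton_iff]
      constructor
      · rintro (rfl | ⟨h1, _⟩)
        exacts [hmS, h1]
      · intro ht
        by_cases h : t = m
        exacts [Or.inl h, Or.inr ⟨ht, h⟩]
    · exact List.pairwise_cons.mpr ⟨fun b hb => hsink b ((hmem b).1 hb).1, hpw⟩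

end Aux

lemma seq_of_pairwise (N : RPN P T) : ∀ (l : List T) (M₁ : Set P),
    (∀ t ∈ l, enabled N t M₁) →
    l.Pairwise (fun a b => Disjoint (N.pre a) (N.pre b)) →
    l.Pairwise (fun a b => ¬ preempt N a b) →
    seqEnabled N M₁ l := by
  intro l
  induction l with
  | nil => intro _ _ _ _; trivial
  | cons t l ih =>
    intro M₁ hen hdis hpre
    rw [List.pairwise_cons] at hdis hpre
    refine ⟨hen t (by simp), ih _ ?_ hdis.2 hpre.2⟩
    intro t' ht'
    have h1 : N.pre t' ∪ N.cont t' ⊆ M₁ := hen t' (by simp [ht'])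
    intro x hx
    left
    refine ⟨h1 hx, ?_⟩
    rcases hx with hx | hx
    · exact fun hxp => Set.disjoint_left.mp (hdis.1 t' ht') hxp hx
    · exact fun hxp => hpre.1 t' ht' ⟨x, hxp, hx⟩


/-- if `S` fires as a step from `M` and `(S, M)` is normal
(`S` is not a-enabled in `M`), then `S` contains a preemption cycle. -/
theorem normal_contains_preemption_cycle {P T : Type} [Finite P] [Finite T]
    (N : RPN P T) (S : Set T) (M M' : Set P)
    (hstep : stepFires N S M M') (hnorm : ¬ aEnabled N S M) :
    ∃ S' ⊆ S, S'.Nonempty ∧ isPreemptionCycle N S' := by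
  by_contra hcon
  push_neg at hcon
  have hacyc : ∀ t, ¬ Relation.TransGen (fun a b => a ∈ S ∧ b ∈ S ∧ preempt N a b) t t := by
    intro t ht
    obtain ⟨C0, hC0, hch0, hwrap0⟩ := exists_raw_cycle ht
    obtain ⟨D, hD, hnd, hch, hwrap, hsub⟩ :=
      exists_simple_cycle_aux C0.length C0 le_rfl hC0 hch0 hwrap0
    obtain ⟨a, l, rfl⟩ := List.exists_cons_of_ne_nil hD
    have hhead : (a :: l).head hD = a := rfl
    have hsubS : ∀ x ∈ a :: l, x ∈ S := by
      intro x hxD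
      rcases List.mem_cons.mp hxD with rfl | hxl
      · have := hwrap.2.1
        rwa [hhead] at this
      · have hchain : List.Chain (fun a b => a ∈ S ∧ b ∈ S ∧ preempt N a b) a l := hch
        obtain ⟨y, hy⟩ := chain_targets hchain x hxl
        exact hy.2.1
    refine hcon {x | x ∈ a :: l} (fun x hx => hsubS x hx) ⟨a, by simp⟩
      ⟨a :: l, hD, hnd, fun t => Iff.rfl, ?_, ?_⟩
    · exact hch.imp (fun a b h => h.2.2)
    · exact hwrap.2.2
  obtain ⟨l, hnd, hmem, hpw⟩ := topo_sort (preempt N) S.ncard S le_rfl hacyc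
  apply hnorm
  refine ⟨l, hnd, hmem, ?_⟩
  apply seq_of_pairwise
  · intro t ht
    exact hstep.1 t ((hmem t).1 ht)
  · exact List.Pairwise.imp_of_mem
      (fun {a b} ha hb hne => hstep.2.1 ((hmem a).1 ha) ((hmem b).1 hb) hne) hnd
  · exact hpw
end

section
/- The interval semantics simulates the atomic semantics: Let N be an RPN and, for any marking M of N, let M' := {p^c : p ∈ M} ∪ {p^r : p ∈ M} denote the corresponding complete marking of split(N). Then for all markings M₁, M₂ of N and every transition t of N with M₁ →_t M₂ in N: in split(N), the transition t⁻ is enabled in M'₁, firing t⁻ from M'₁ leads to a marking in which t⁺ is enabled, and firing t⁺ from that marking leads to M'₂. -/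
variable {P T : Type}

/-- The split net `split(N)`: places `p^c = inl (p, false)`, `p^r = inl (p, true)`,
`p_t = inr t`; transitions `t⁻ = (t, false)` and `t⁺ = (t, true)`. -/
def split (N : RPN P T) : RPN ((P × Bool) ⊕ T) (T × Bool) where
  pre := fun s => match s with
    | (t, false) => (fun p => Sum.inl (p, false)) '' N.pre t
    | (t, true) => (fun p => Sum.inl (p, true)) '' N.pre t ∪ {Sum.inr t}
  cont := fun s => match s with
    | (t, false) => (fun p => Sum.inl (p, true)) '' N.cont t
    | (_, true) => ∅
  post := fun s => match s with
    | (t, false) => {Sum.inr t}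
    | (t, true) => (fun p => Sum.inl (p, false)) '' N.post t ∪
        (fun p => Sum.inl (p, true)) '' N.post t
  M0 := (fun p => Sum.inl (p, false)) '' N.M0 ∪ (fun p => Sum.inl (p, true)) '' N.M0
  pre_nonempty := by
    rintro ⟨t, b⟩
    cases b
    · exact (N.pre_nonempty t).image _
    · exact ⟨Sum.inr t, Or.inr rfl⟩
  cont_disjoint := by
    rintro ⟨t, b⟩
    cases b
    · rw [Set.disjoint_left]
      rintro x ⟨p, _, rfl⟩ ⟨q, _, h⟩
      simp at h
    · simp

/-- The complete marking of `split(N)` corresponding to a marking `M` of `N`. -/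
def embMark (M : Set P) : Set ((P × Bool) ⊕ T) :=
  (fun p => Sum.inl (p, false)) '' M ∪ (fun p => Sum.inl (p, true)) '' M

/-- The marking of `split(N)` with `p^c` marked for `p ∈ C`, `p^r` for `p ∈ R` and `p_t` for
`t ∈ S`, the transitions in progress. -/
def splitMark (C R : Set P) (S : Set T) : Set ((P × Bool) ⊕ T) :=
  (fun p => Sum.inl (p, false)) '' C ∪ (fun p => Sum.inl (p, true)) '' R ∪ Sum.inr '' S

theorem embMark_eq_splitMark (M : Set P) : embMark M = splitMark (T := T) M M ∅ := by
  simp [embMark, splitMark]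

theorem preimage_inl_false_splitMark (C R : Set P) (S : Set T) :
    (fun p => Sum.inl (p, false)) ⁻¹' splitMark C R S = C := by
  ext; simp [splitMark]

theorem preimage_inl_true_splitMark (C R : Set P) (S : Set T) :
    (fun p => Sum.inl (p, true)) ⁻¹' splitMark C R S = R := by
  ext; simp [splitMark]

theorem inr_mem_splitMark {C R : Set P} {S : Set T} {s : T} :
    Sum.inr s ∈ splitMark C R S ↔ s ∈ S := by
  simp [splitMark]

section split

variable (N : RPN P T) (t : T) (C R : Set P) (S : Set T)

theorem enabled_split_false_splitMark_iff :
    enabled (split N) (t, false) (splitMark C R S) ↔ N.pre t ⊆ C ∧ N.cont t ⊆ R := by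
  simp only [enabled, split, Set.union_subset_iff, Set.image_subset_iff,
    preimage_inl_false_splitMark, preimage_inl_true_splitMark]

theorem fireRes_split_false_splitMark :
    fireRes (split N) (t, false) (splitMark C R S) = splitMark (C \ N.pre t) R (insert t S) := by
  ext (⟨p, _ | _⟩ | s) <;> simp [fireRes, split, splitMark]

theorem enabled_split_true_splitMark_iff :
    enabled (split N) (t, true) (splitMark C R S) ↔ N.pre t ⊆ R ∧ t ∈ S := by
  simp only [enabled, split, Set.union_empty, Set.union_singleton, Set.insert_subset_iff,
    Set.image_subset_iff, inr_mem_splitMark, preimage_inl_true_splitMark]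
  exact and_comm

theorem fireRes_split_true_splitMark :
    fireRes (split N) (t, true) (splitMark C R S) =
      splitMark (C ∪ N.post t) (R \ N.pre t ∪ N.post t) (S \ {t}) := by
  ext (⟨p, _ | _⟩ | s) <;> simp [fireRes, split, splitMark]

end split

theorem interval_simulates_atomic_general {P T : Type}
    (N : RPN P T)
    (t : T) (M₁ M₂ : Set P) (h : fire N t M₁ M₂) :
    enabled (split N) (t, false) (embMark M₁) ∧
    enabled (split N) (t, true) (fireRes (split N) (t, false) (embMark M₁)) ∧
    fireRes (split N) (t, true) (fireRes (split N) (t, false) (embMark M₁)) =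
      embMark M₂ := by
  obtain ⟨hen, rfl⟩ := h
  obtain ⟨hpre, hcont⟩ := Set.union_subset_iff.mp hen
  simp only [embMark_eq_splitMark, enabled_split_false_splitMark_iff,
    fireRes_split_false_splitMark, enabled_split_true_splitMark_iff,
    fireRes_split_true_splitMark]
  refine ⟨⟨hpre, hcont⟩, ⟨hpre, Set.mem_insert t ∅⟩, ?_⟩
  rw [LawfulSingleton.insert_empty_eq, Set.diff_self]
  rfl

/-- the interval semantics simulates the atomic semantics. If `N` is
safe and `M₁ →_t M₂` in `N`, then in `split(N)`, `t⁻` is enabled in `M'₁`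
(the complete marking corresponding to `M₁`), firing `t⁻` leads to a marking in
which `t⁺` is enabled, and firing `t⁺` from that marking leads to `M'₂`. -/
theorem interval_simulates_atomic {P T : Type} [Finite P] [Finite T]
    (N : RPN P T)
    (hsafe : ∀ (t : T) (M : Set P), enabled N t M → Disjoint (M \ N.pre t) (N.post t))
    (t : T) (M₁ M₂ : Set P) (h : fire N t M₁ M₂) :
    enabled (split N) (t, false) (embMark M₁) ∧
    enabled (split N) (t, true) (fireRes (split N) (t, false) (embMark M₁)) ∧
    fireRes (split N) (t, true) (fireRes (split N) (t, false) (embMark M₁)) =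
      embMark M₂ :=
  interval_simulates_atomic_general N t M₁ M₂ h
end
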